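/- arXiv:2111.10485 — 6 statements merged into one kernel-verified Lean document; each statement's English description precedes it below -/
import Mathlib

section
/- For every positive integer n, every d ∈ {0,…,2^n−1}, and all i,j ∈ {0,…,2^n−1} with i ≠ j, it is not the case that both ind(i,j) < d·2^{n−1} and ind(j,i) < d·2^{n−1}; that is, at most one of ind(i,j), ind(j,i) lies in {0,…,d·2^{n−1}−1}. -/
/-- The index function `ind(i,j) = 2^n * ((j - i) mod 2^n) + i` for `i, j ∈ {0,…,2^n−1}`,
where `(j - i) mod 2^n` is the representative in `{0,…,2^n−1}` of the integer `j - i`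
modulo `2^n`. -/
def ind (n : ℕ) (i j : Fin (2 ^ n)) : ℕ :=
  2 ^ n * (((j : ℤ) - (i : ℤ)) % (2 ^ n : ℤ)).toNat + (i : ℕ)

/-!
For `i ≠ j` the residues `(j - i) mod 2^n` and `(i - j) mod 2^n` are nonzero and hence add up to
`2^n`, so `ind(i,j) + ind(j,i) ≥ 2^n · 2^n`. Two numbers below `d · 2^(n-1)` add up to less than
`d · 2^n < 2^n · 2^n`.
-/

theorem Int.emod_add_neg_emod_of_not_dvd {a b : ℤ} (hb : 0 < b) (h : ¬b ∣ a) :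
    a % b + -a % b = b := by
  rw [Int.neg_emod, if_neg h, Int.natAbs_of_nonneg hb.le]
  ring

theorem Fin.not_dvd_sub_of_ne {m : ℕ} {i j : Fin m} (hij : i ≠ j) : ¬(m : ℤ) ∣ (j : ℤ) - i := by
  intro hdvd
  have hsub := Int.eq_zero_of_abs_lt_dvd hdvd (by rw [abs_lt]; omega)
  exact hij (Fin.ext (by omega))

theorem ind_add_ind_of_ne {n : ℕ} {i j : Fin (2 ^ n)} (hij : i ≠ j) :
    ind n i j + ind n j i = 2 ^ n * 2 ^ n + i + j := by
  have hN : (0 : ℤ) < 2 ^ n := by positivity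
  have hsum : ((j : ℤ) - i) % 2 ^ n + ((i : ℤ) - j) % 2 ^ n = 2 ^ n := by
    have hndvd := Fin.not_dvd_sub_of_ne hij
    push_cast at hndvd
    rw [← neg_sub (j : ℤ) i]
    exact Int.emod_add_neg_emod_of_not_dvd hN hndvd
  zify [ind]
  rw [Int.toNat_of_nonneg (Int.emod_nonneg _ hN.ne'), Int.toNat_of_nonneg (Int.emod_nonneg _ hN.ne')]
  linear_combination (2 : ℤ) ^ n * hsum

/-- For every positive integer `n`, every `d ∈ {0,…,2^n−1}`, and all `i ≠ j` in
`{0,…,2^n−1}`, it is not the case that both `ind(i,j) < d·2^{n−1}` and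
`ind(j,i) < d·2^{n−1}`. -/
theorem not_both_ind_lt (n : ℕ) (hn : 0 < n) (d : ℕ) (hd : d < 2 ^ n)
    (i j : Fin (2 ^ n)) (hij : i ≠ j) :
    ¬(ind n i j < d * 2 ^ (n - 1) ∧ ind n j i < d * 2 ^ (n - 1)) := by
  rintro ⟨hlt₁, hlt₂⟩
  have hsum := ind_add_ind_of_ne hij
  refine lt_irrefl (2 ^ n * 2 ^ n) ?_
  calc 2 ^ n * 2 ^ n ≤ ind n i j + ind n j i := by omega
    _ < d * 2 ^ (n - 1) + d * 2 ^ (n - 1) := by omega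
    _ = d * 2 ^ n := by rw [← mul_add, ← two_mul, mul_comm 2, Nat.two_pow_pred_mul_two hn]
    _ < 2 ^ n * 2 ^ n := by gcongr
end

section
/- For every positive integer n, every d ∈ {0,…,2^n−1}, every β > 0 and every function g : {0,…,d·2^{n−1}−1} → [0,β], the (n,d)-matrix encoding M of g is d-sparse: for every row index i ∈ {0,…,2^n−1}, the number of column indices j with M_{ij} ≠ 0 is at most d. -/
/-- The `(n,d)`-matrix encoding of a function `g` (given as `g : ℕ → ℝ`, only its values
on `{0,…,d·2^{n−1}−1}` are relevant): the `2^n × 2^n` real matrix `M` with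
`M_{ii} = g(ind(i,i))` if `ind(i,i) < d·2^{n−1}` and `0` otherwise; and for `i ≠ j`,
`M_{ij} = g(ind(i,j))/2` if `ind(i,j) < d·2^{n−1}`, `M_{ij} = g(ind(j,i))/2` if
`ind(j,i) < d·2^{n−1}`, and `0` otherwise. -/
noncomputable def matrixEncoding (n d : ℕ) (g : ℕ → ℝ) : Matrix (Fin (2 ^ n)) (Fin (2 ^ n)) ℝ :=
  fun i j =>
    if i = j then
      (if ind n i i < d * 2 ^ (n - 1) then g (ind n i i) else 0)
    else if ind n i j < d * 2 ^ (n - 1) then g (ind n i j) / 2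
    else if ind n j i < d * 2 ^ (n - 1) then g (ind n j i) / 2
    else 0

open Fin.NatCast Fin.IntCast Fin.CommRing in
lemma cast_emod_pow (n : ℕ) (a : ℤ) :
    ((a % (2 ^ n : ℤ) : ℤ) : Fin (2 ^ n)) = (a : Fin (2 ^ n)) := by
  have h2 : ((2 ^ n : ℤ) : Fin (2 ^ n)) = 0 := by
    have : ((2 ^ n : ℕ) : Fin (2 ^ n)) = 0 := Fin.natCast_self _
    push_cast at this ⊢
    exact_mod_cast this
  have := Int.emod_add_mul_ediv a (2 ^ n)
  calc ((a % (2 ^ n : ℤ) : ℤ) : Fin (2 ^ n))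
      = ((a - 2 ^ n * (a / 2 ^ n) : ℤ) : Fin (2 ^ n)) := by
        congr 1; omega
    _ = (a : Fin (2 ^ n)) := by push_cast [h2]; ring

open Fin.NatCast Fin.IntCast Fin.CommRing in
lemma add_cast_sub (n : ℕ) (i j : Fin (2 ^ n)) :
    i + (((((j : ℤ) - (i : ℤ)) % (2 ^ n : ℤ)) : ℤ) : Fin (2 ^ n)) = j := by
  rw [cast_emod_pow]
  push_cast [Fin.cast_val_eq_self]
  ring

open Fin.NatCast Fin.IntCast Fin.CommRing in
theorem matrixEncoding_sparse' (n : ℕ) (hn : 0 < n) (d : ℕ) (hd : d < 2 ^ n)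
    (g : ℕ → ℝ) (i : Fin (2 ^ n)) :
    (Finset.univ.filter fun j : Fin (2 ^ n) =>
      (if i = j then
        (if ind n i i < d * 2 ^ (n - 1) then g (ind n i i) else 0)
      else if ind n i j < d * 2 ^ (n - 1) then g (ind n i j) / 2
      else if ind n j i < d * 2 ^ (n - 1) then g (ind n j i) / 2
      else 0) ≠ 0).card ≤ d := by
  classical
  set m : ℤ := ((d : ℤ) + 1) / 2 with hm
  have hpow : (2 : ℕ) ^ n = 2 * 2 ^ (n - 1) := by
    rw [← pow_succ']; congr 1; omega
  have hpos : (0 : ℕ) < 2 ^ (n - 1) := Nat.pow_pos (by norm_num)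
  -- bound on the residue from the ind condition
  have bound : ∀ a b : Fin (2 ^ n), ind n a b < d * 2 ^ (n - 1) →
      2 * (((b : ℤ) - (a : ℤ)) % (2 ^ n : ℤ)).toNat < d := by
    intro a b h
    unfold ind at h
    set k := (((b : ℤ) - (a : ℤ)) % (2 ^ n : ℤ)).toNat
    have h1 : 2 ^ n * k < d * 2 ^ (n - 1) := lt_of_le_of_lt (Nat.le_add_right _ _) h
    rw [hpow] at h1
    nlinarith [hpos]
  have key : (Finset.univ.filter fun j : Fin (2 ^ n) =>
      (if i = j then
        (if ind n i i < d * 2 ^ (n - 1) then g (ind n i i) else 0)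
      else if ind n i j < d * 2 ^ (n - 1) then g (ind n i j) / 2
      else if ind n j i < d * 2 ^ (n - 1) then g (ind n j i) / 2
      else 0) ≠ 0) ⊆
      (Finset.Icc (-(m - 1)) (m - 1)).image (fun k : ℤ => i + (k : Fin (2 ^ n))) := by
    intro j hj
    simp only [Finset.mem_filter, Finset.mem_univ, true_and] at hj
    simp only [Finset.mem_image, Finset.mem_Icc]
    split_ifs at hj with heq hii hij hji
    · -- i = j, diagonal
      have hb := bound i i hii
      refine ⟨0, by omega, ?_⟩
      subst heq
      simpa using (add_cast_sub n i i)
    · exact absurd rfl hj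
    · -- ind n i j < bound
      have hb := bound i j hij
      set k : ℤ := ((j : ℤ) - (i : ℤ)) % (2 ^ n : ℤ) with hk
      have hk0 : 0 ≤ k := Int.emod_nonneg _ (by positivity)
      have hkt : (k.toNat : ℤ) = k := Int.toNat_of_nonneg hk0
      refine ⟨k, by omega, add_cast_sub n i j⟩
    · -- ind n j i < bound
      have hb := bound j i hji
      set k : ℤ := ((i : ℤ) - (j : ℤ)) % (2 ^ n : ℤ) with hk
      have hk0 : 0 ≤ k := Int.emod_nonneg _ (by positivity)
      have hkt : (k.toNat : ℤ) = k := Int.toNat_of_nonneg hk0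
      refine ⟨-k, by omega, ?_⟩
      have h5 : ((k : ℤ) : Fin (2 ^ n)) = ((((i : ℤ) - (j : ℤ)) : ℤ) : Fin (2 ^ n)) := by
        rw [hk]; exact cast_emod_pow n _
      have h6 : i + (((-k : ℤ)) : Fin (2 ^ n)) = j := by
        rw [show ((-k : ℤ) : Fin (2 ^ n)) = ((((j : ℤ) - (i : ℤ)) : ℤ) : Fin (2 ^ n)) from by
          rw [Int.cast_neg, h5]; push_cast; ring]
        rw [← cast_emod_pow n ((j : ℤ) - (i : ℤ))]
        exact add_cast_sub n i j
      exact h6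
    · exact absurd rfl hj
  calc _ ≤ ((Finset.Icc (-(m - 1)) (m - 1)).image
        (fun k : ℤ => i + (k : Fin (2 ^ n)))).card := Finset.card_le_card key
    _ ≤ (Finset.Icc (-(m - 1)) (m - 1)).card := Finset.card_image_le
    _ = ((m - 1) + 1 - (-(m - 1))).toNat := Int.card_Icc _ _
    _ ≤ d := by omega


/-- The `(n,d)`-matrix encoding of `g : {0,…,d·2^{n−1}−1} → [0,β]` is `d`-sparse:
every row has at most `d` non-zero entries. -/
theorem matrixEncoding_sparse (n : ℕ) (hn : 0 < n) (d : ℕ) (hd : d < 2 ^ n)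
    (β : ℝ) (hβ : 0 < β) (g : ℕ → ℝ)
    (hg : ∀ k < d * 2 ^ (n - 1), g k ∈ Set.Icc (0 : ℝ) β) (i : Fin (2 ^ n)) :
    (Finset.univ.filter fun j : Fin (2 ^ n) => matrixEncoding n d g i j ≠ 0).card ≤ d := by
  exact matrixEncoding_sparse' n hn d hd g i
end

section
/- For every positive integer n, every d ∈ {0,…,2^n−1}, every β > 0 and every function g : {0,…,d·2^{n−1}−1} → [0,β], the entries of the (n,d)-matrix encoding M of g satisfy Σ_{i,j ∈ {0,…,2^n−1}} M_{ij} = Σ_{k=0}^{d·2^{n−1}−1} g(k). -/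
private lemma md_lt (n : ℕ) (i j : Fin (2 ^ n)) :
    (((j : ℤ) - (i : ℤ)) % (2 ^ n : ℤ)).toNat < 2 ^ n := by
  have h : (0:ℤ) < 2 ^ n := by positivity
  have h2 : ((2:ℤ) ^ n) = ((2 ^ n : ℕ) : ℤ) := by push_cast; ring
  have := Int.emod_lt_of_pos ((j : ℤ) - (i : ℤ)) h
  omega

private lemma ind_mod (n : ℕ) (i j : Fin (2 ^ n)) : ind n i j % 2 ^ n = (i : ℕ) := by
  simp [ind, Nat.mul_add_mod, Nat.mod_eq_of_lt i.isLt]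

private lemma ind_div (n : ℕ) (i j : Fin (2 ^ n)) :
    ind n i j / 2 ^ n = (((j : ℤ) - (i : ℤ)) % (2 ^ n : ℤ)).toNat := by
  unfold ind
  rw [Nat.mul_add_div (by positivity), Nat.div_eq_of_lt i.isLt, add_zero]

private lemma ind_lt (n : ℕ) (i j : Fin (2 ^ n)) : ind n i j < 2 ^ n * 2 ^ n := by
  have h1 := md_lt n i j
  have h2 := i.isLt
  unfold ind
  calc 2 ^ n * (((j : ℤ) - (i : ℤ)) % (2 ^ n : ℤ)).toNat + (i:ℕ)
      < 2 ^ n * ((((j : ℤ) - (i : ℤ)) % (2 ^ n : ℤ)).toNat + 1) := by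
        rw [Nat.mul_add, Nat.mul_one]; omega
    _ ≤ 2 ^ n * 2 ^ n := by gcongr; omega

private lemma ind_snd (n : ℕ) (i j : Fin (2 ^ n)) :
    ((i : ℕ) + (((j : ℤ) - (i : ℤ)) % (2 ^ n : ℤ)).toNat) % 2 ^ n = (j : ℕ) := by
  have hm := Int.emod_nonneg ((j : ℤ) - (i : ℤ)) (show (2:ℤ)^n ≠ 0 by positivity)
  set m : ℤ := ((j : ℤ) - (i : ℤ)) % (2 ^ n : ℤ) with hmdef
  have hmod : m % 2 ^ n = ((j:ℤ) - (i:ℤ)) % 2 ^ n := Int.emod_emod_of_dvd _ dvd_rfl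
  have key : ((i:ℤ) + m) % 2 ^ n = (j:ℤ) := by
    have h1 : ((i:ℤ) + m) % 2 ^ n = ((i:ℤ) + ((j:ℤ) - (i:ℤ))) % 2 ^ n :=
      Int.ModEq.add_left _ hmod
    rw [h1]
    have h2 : (i:ℤ) + ((j:ℤ) - (i:ℤ)) = (j:ℤ) := by ring
    rw [h2]
    refine Int.emod_eq_of_lt (by positivity) ?_
    exact_mod_cast j.isLt
  have := congrArg Int.toNat key
  rwa [show ((i:ℤ) + m) % 2^n = (((((i:ℕ) + m.toNat) % 2^n : ℕ) : ℤ)) by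
      push_cast [Int.toNat_of_nonneg hm]; ring_nf, Int.toNat_natCast] at this

/-- Decoding: `ind` applied to `(k % 2^n, (k % 2^n + k / 2^n) % 2^n)` recovers `k`. -/
private lemma ind_decode (n k : ℕ) (hk : k < 2 ^ n * 2 ^ n) :
    ind n ⟨k % 2 ^ n, Nat.mod_lt _ (by positivity)⟩
        ⟨(k % 2 ^ n + k / 2 ^ n) % 2 ^ n, Nat.mod_lt _ (by positivity)⟩ = k := by
  set i' : ℕ := k % 2 ^ n with hi'
  set q : ℕ := k / 2 ^ n with hq
  have hqlt : q < 2 ^ n := Nat.div_lt_of_lt_mul hk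
  have hj : ((((i' + q) % 2 ^ n : ℕ)) : ℤ) = ((i':ℤ) + (q:ℤ)) % (2 ^ n : ℤ) := by
    push_cast; ring_nf
  have hm : ((((i' + q) % 2 ^ n : ℕ) : ℤ) - (i' : ℤ)) % (2 ^ n : ℤ) = (q : ℤ) := by
    rw [hj]
    have h1 : (((i':ℤ) + q) % 2 ^ n - (i':ℤ)) % 2 ^ n
        = (((i':ℤ) + q) - (i':ℤ)) % 2 ^ n :=
      Int.ModEq.sub_right _ (Int.emod_emod_of_dvd _ dvd_rfl)
    rw [h1]
    have h2 : ((i':ℤ) + q) - (i':ℤ) = (q:ℤ) := by ring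
    rw [h2]
    refine Int.emod_eq_of_lt (by positivity) ?_
    exact_mod_cast hqlt
  show 2 ^ n * (((((i' + q) % 2 ^ n : ℕ) : ℤ) - (i' : ℤ)) % (2 ^ n : ℤ)).toNat + i' = k
  rw [hm, Int.toNat_natCast, hi', hq]
  exact Nat.div_add_mod k (2 ^ n)

/-- For `i ≠ j`, `ind n i j + ind n j i = 2^n * 2^n + i + j`. -/
private lemma ind_add_ind (n : ℕ) (i j : Fin (2 ^ n)) (hij : i ≠ j) :
    ind n i j + ind n j i = 2 ^ n * 2 ^ n + (i : ℕ) + (j : ℕ) := by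
  have hP : (0:ℤ) < 2 ^ n := by positivity
  have hc : ((2 ^ n : ℕ) : ℤ) = (2:ℤ) ^ n := by push_cast; ring
  set a : ℤ := ((j : ℤ) - (i : ℤ)) % (2 ^ n : ℤ) with hadef
  set b : ℤ := ((i : ℤ) - (j : ℤ)) % (2 ^ n : ℤ) with hbdef
  have ha0 : 0 ≤ a := Int.emod_nonneg _ (by positivity)
  have hb0 : 0 ≤ b := Int.emod_nonneg _ (by positivity)
  have ha1 : a < 2 ^ n := Int.emod_lt_of_pos _ hP
  have hb1 : b < 2 ^ n := Int.emod_lt_of_pos _ hP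
  have hane : a ≠ 0 := by
    intro h
    have hdvd : (2:ℤ) ^ n ∣ (j : ℤ) - (i : ℤ) := Int.dvd_of_emod_eq_zero h
    have hi2 : ((i:ℕ):ℤ) < 2 ^ n := by exact_mod_cast i.isLt
    have hj2 : ((j:ℕ):ℤ) < 2 ^ n := by exact_mod_cast j.isLt
    have hlt : |(j:ℤ) - (i:ℤ)| < 2 ^ n := by
      rw [abs_lt]
      constructor
      · have : (0:ℤ) ≤ (j:ℤ) := Int.natCast_nonneg _
        linarith
      · have : (0:ℤ) ≤ (i:ℤ) := Int.natCast_nonneg _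
        linarith
    have hz : (j:ℤ) - (i:ℤ) = 0 := Int.eq_zero_of_abs_lt_dvd hdvd hlt
    have : (j:ℕ) = (i:ℕ) := by exact_mod_cast sub_eq_zero.mp hz
    exact hij (Fin.ext this.symm)
  have hapos : 0 < a := lt_of_le_of_ne ha0 (Ne.symm hane)
  have hsum : a + b = 2 ^ n := by
    have hmodsum : (a + b) % 2 ^ n = 0 := by
      have h1 : a % 2 ^ n = ((j:ℤ) - (i:ℤ)) % 2 ^ n := Int.emod_emod_of_dvd _ dvd_rfl
      have h2 : b % 2 ^ n = ((i:ℤ) - (j:ℤ)) % 2 ^ n := Int.emod_emod_of_dvd _ dvd_rfl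
      have h3 : (a + b) % 2 ^ n = (((j:ℤ) - (i:ℤ)) + ((i:ℤ) - (j:ℤ))) % 2 ^ n :=
        Int.ModEq.add h1 h2
      simpa using h3
    rcases Int.dvd_of_emod_eq_zero hmodsum with ⟨k, hk⟩
    rcases lt_trichotomy k 1 with hk1 | hk1 | hk1
    · exfalso
      have hk0 : k ≤ 0 := by omega
      have : (2:ℤ) ^ n * k ≤ 0 := mul_nonpos_of_nonneg_of_nonpos hP.le hk0
      linarith
    · rw [hk, hk1, mul_one]
    · exfalso
      have hk2 : (2:ℤ) ≤ k := by omega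
      have : (2:ℤ) ^ n * 2 ≤ 2 ^ n * k := by gcongr
      linarith
  have hna : (a.toNat : ℤ) = a := Int.toNat_of_nonneg ha0
  have hnb : (b.toNat : ℤ) = b := Int.toNat_of_nonneg hb0
  have hsumn : a.toNat + b.toNat = 2 ^ n := by omega
  show 2 ^ n * a.toNat + (i:ℕ) + (2 ^ n * b.toNat + (j:ℕ)) = 2 ^ n * 2 ^ n + (i:ℕ) + (j:ℕ)
  have hmul : 2 ^ n * a.toNat + 2 ^ n * b.toNat = 2 ^ n * 2 ^ n := by
    rw [← Nat.mul_add, hsumn]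
  linarith

private lemma not_both (n d : ℕ) (hn : 0 < n) (hd : d < 2 ^ n) (i j : Fin (2 ^ n))
    (hij : i ≠ j) (h1 : ind n i j < d * 2 ^ (n - 1)) :
    ¬ ind n j i < d * 2 ^ (n - 1) := by
  intro h2
  have hkey := ind_add_ind n i j hij
  have hpow : 2 ^ (n - 1) * 2 = 2 ^ n := by
    rw [← pow_succ]; congr 1; omega
  have h3 : d * 2 ^ (n - 1) * 2 ≤ (2 ^ n - 1) * 2 ^ n := by
    calc d * 2 ^ (n - 1) * 2 = d * (2 ^ (n-1) * 2) := by ring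
      _ = d * 2 ^ n := by rw [hpow]
      _ ≤ (2 ^ n - 1) * 2 ^ n := by gcongr; omega
  have hpos : 0 < 2 ^ n := Nat.pow_pos (by norm_num)
  have h4 : (2 ^ n - 1) * 2 ^ n = 2 ^ n * 2 ^ n - 2 ^ n := by
    rw [Nat.sub_mul, Nat.one_mul]
  omega

/-- The entries of the `(n,d)`-matrix encoding `M` of `g : {0,…,d·2^{n−1}−1} → [0,β]`
satisfy `Σ_{i,j} M_{ij} = Σ_{k=0}^{d·2^{n−1}−1} g(k)`. -/
theorem matrixEncoding_sum (n : ℕ) (hn : 0 < n) (d : ℕ) (hd : d < 2 ^ n)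
    (β : ℝ) (hβ : 0 < β) (g : ℕ → ℝ)
    (hg : ∀ k < d * 2 ^ (n - 1), g k ∈ Set.Icc (0 : ℝ) β) :
    ∑ i : Fin (2 ^ n), ∑ j : Fin (2 ^ n), matrixEncoding n d g i j
      = ∑ k ∈ Finset.range (d * 2 ^ (n - 1)), g k := by
  set N := d * 2 ^ (n - 1) with hN
  set F : Fin (2 ^ n) → Fin (2 ^ n) → ℝ :=
    fun i j => if ind n i j < N then g (ind n i j) else 0 with hF
  have stepA : ∀ i j, matrixEncoding n d g i j = (F i j + F j i) / 2 := by
    intro i j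
    unfold matrixEncoding
    rw [← hN]
    by_cases hij : i = j
    · subst hij
      simp only [if_pos rfl, hF]
      by_cases h : ind n i i < N <;> simp [h] <;> try ring
    · simp only [if_neg hij, hF]
      by_cases h1 : ind n i j < N
      · have h2 := not_both n d hn hd i j hij h1
        rw [← hN] at h2
        simp [h1, h2]
      · by_cases h2 : ind n j i < N
        · simp [h1, h2]
        · simp [h1, h2]
  have stepB : ∑ i : Fin (2 ^ n), ∑ j : Fin (2 ^ n), matrixEncoding n d g i j
      = ∑ i : Fin (2 ^ n), ∑ j : Fin (2 ^ n), F i j := by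
    simp_rw [stepA]
    simp_rw [← Finset.sum_div, Finset.sum_add_distrib]
    have swap : (∑ i : Fin (2^n), ∑ j : Fin (2^n), F j i)
        = ∑ i : Fin (2^n), ∑ j : Fin (2^n), F i j := Finset.sum_comm
    rw [swap, add_self_div_two]
  rw [stepB, ← Finset.sum_product']
  have hfilter : (∑ p ∈ Finset.univ ×ˢ Finset.univ, F p.1 p.2)
      = ∑ p ∈ (Finset.univ ×ˢ Finset.univ).filter
          (fun p : Fin (2^n) × Fin (2^n) => ind n p.1 p.2 < N), g (ind n p.1 p.2) := by
    rw [Finset.sum_filter]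
  rw [hfilter]
  have hNle : N ≤ 2 ^ n * 2 ^ n := by
    have hpow : 2 ^ (n - 1) ≤ 2 ^ n := Nat.pow_le_pow_right (by norm_num) (by omega)
    calc N = d * 2 ^ (n-1) := rfl
      _ ≤ 2 ^ n * 2 ^ n := by gcongr <;> omega
  refine Finset.sum_nbij' (fun p => ind n p.1 p.2)
    (fun k => (⟨k % 2 ^ n, Nat.mod_lt _ (by positivity)⟩,
               ⟨(k % 2 ^ n + k / 2 ^ n) % 2 ^ n, Nat.mod_lt _ (by positivity)⟩))
    ?_ ?_ ?_ ?_ ?_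
  · intro p hp
    simp only [Finset.mem_filter] at hp
    exact Finset.mem_range.mpr hp.2
  · intro k hk
    have hk' : k < N := Finset.mem_range.mp hk
    have hdec := ind_decode n k (lt_of_lt_of_le hk' hNle)
    simp only [Finset.mem_filter, Finset.mem_product]
    exact ⟨⟨Finset.mem_univ _, Finset.mem_univ _⟩, by rw [hdec]; exact hk'⟩
  · intro p hp
    obtain ⟨i, j⟩ := p
    refine Prod.ext (Fin.ext ?_) (Fin.ext ?_)
    · simpa using ind_mod n i j
    · simp only
      rw [ind_mod, ind_div]
      exact ind_snd n i j
  · intro k hk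
    have hk' : k < N := Finset.mem_range.mp hk
    exact ind_decode n k (lt_of_lt_of_le hk' hNle)
  · intro p hp
    rfl
end

section
/- Let N be a positive integer, let M be an N × N Hermitian complex matrix, let Λ > 0 satisfy ‖M‖ ≤ Λ (operator norm), and let ψ ∈ ℂ^N be a unit vector. Let C be the 2N × 2N block matrix C = fromBlocks(I_N, 0, 0, M/Λ), i.e. C = |0⟩⟨0| ⊗ I_N + |1⟩⟨1| ⊗ (M/Λ), and let χ ∈ ℂ^{2N} be the unit vector χ = (1/√2)·(ψ, ψ), i.e. χ = |+⟩ ⊗ ψ. Then ⟨ψ, Mψ⟩ = Λ·(2·|⟨χ, Cχ⟩| − 1). (Here ⟨ψ, Mψ⟩ is real since M is Hermitian.) -/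
/-!
Since `C` is block diagonal and `χ` puts half of its weight on each copy of `ψ`,
`⟨χ, Cχ⟩ = (1 + ⟨ψ, Mψ⟩ / Λ) / 2`. As `M` is Hermitian, `⟨ψ, Mψ⟩` is real, and
`|⟨ψ, Mψ⟩| ≤ ‖M‖ ≤ Λ`, so this amplitude is a nonnegative real number: taking its absolute value
changes nothing, and solving for `⟨ψ, Mψ⟩` gives the claim.
-/

open Matrix

/-- The operator norm of a complex matrix with respect to the Euclidean norm on `ℂ^N`. -/
noncomputable def l2OpNorm {N : ℕ} (M : Matrix (Fin N) (Fin N) ℂ) : ℝ :=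
  ‖Matrix.toEuclideanCLM (𝕜 := ℂ) M‖

namespace Matrix

variable {n : Type*} [Fintype n]

theorem star_sumElim_dotProduct_fromBlocks_diagonal_mulVec {m α : Type*} [Fintype m]
    [NonUnitalNonAssocSemiring α] [Star α] (A : Matrix m m α) (B : Matrix n n α)
    (x : m → α) (y : n → α) :
    star (Sum.elim x y) ⬝ᵥ fromBlocks A 0 0 B *ᵥ Sum.elim x y
      = star x ⬝ᵥ A *ᵥ x + star y ⬝ᵥ B *ᵥ y := by
  simp only [Function.star_sumElim, fromBlocks_mulVec, zero_mulVec, add_zero, zero_add,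
    Sum.elim_comp_inl, Sum.elim_comp_inr, sumElim_dotProduct_sumElim]

theorem IsHermitian.star_dotProduct_mulVec_self_eq_re {A : Matrix n n ℂ} (hA : A.IsHermitian)
    (x : n → ℂ) : star x ⬝ᵥ A *ᵥ x = (star x ⬝ᵥ A *ᵥ x).re :=
  Complex.ext rfl (by simpa using hA.im_star_dotProduct_mulVec_self x)

end Matrix

theorem norm_star_dotProduct_mulVec_le_l2OpNorm {N : ℕ} (A : Matrix (Fin N) (Fin N) ℂ)
    {x : Fin N → ℂ} (hx : star x ⬝ᵥ x = 1) : ‖star x ⬝ᵥ A *ᵥ x‖ ≤ l2OpNorm A := by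
  set v := WithLp.toLp 2 x
  have hv : ‖v‖ = 1 := by
    rw [← pow_eq_one_iff_of_nonneg (norm_nonneg v) two_ne_zero, ← RCLike.ofReal_inj (K := ℂ),
      RCLike.ofReal_pow, ← inner_self_eq_norm_sq_to_K, EuclideanSpace.inner_toLp_toLp,
      dotProduct_comm, hx, RCLike.ofReal_one]
  calc ‖star x ⬝ᵥ A *ᵥ x‖ = ‖inner ℂ v (toEuclideanCLM (𝕜 := ℂ) A v)‖ := by
        rw [toEuclideanCLM_toLp, EuclideanSpace.inner_toLp_toLp, dotProduct_comm]
    _ ≤ ‖v‖ * (l2OpNorm A * ‖v‖) :=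
        (norm_inner_le_norm _ _).trans (by gcongr; exact ContinuousLinearMap.le_opNorm _ _)
    _ = l2OpNorm A := by rw [hv, one_mul, mul_one]

theorem expectation_eq_amplitude_general (N : ℕ)
    (M : Matrix (Fin N) (Fin N) ℂ) (hM : M.IsHermitian)
    (Λ : ℝ) (hΛ : 0 < Λ) (hMΛ : l2OpNorm M ≤ Λ)
    (ψ : Fin N → ℂ) (hψ : star ψ ⬝ᵥ ψ = 1)
    (C : Matrix (Fin N ⊕ Fin N) (Fin N ⊕ Fin N) ℂ)
    (hC : C = Matrix.fromBlocks 1 0 0 ((Λ : ℂ)⁻¹ • M))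
    (χ : Fin N ⊕ Fin N → ℂ)
    (hχ : χ = Sum.elim (((Real.sqrt 2)⁻¹ : ℂ) • ψ) (((Real.sqrt 2)⁻¹ : ℂ) • ψ)) :
    star ψ ⬝ᵥ M.mulVec ψ
      = ((Λ * (2 * ‖star χ ⬝ᵥ C.mulVec χ‖ - 1) : ℝ) : ℂ) := by
  set e := (star ψ ⬝ᵥ M *ᵥ ψ).re
  have he : star ψ ⬝ᵥ M *ᵥ ψ = e := hM.star_dotProduct_mulVec_self_eq_re ψ
  have he_le : |e| ≤ Λ := by
    simpa [he] using (norm_star_dotProduct_mulVec_le_l2OpNorm M hψ).trans hMΛ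
  have hamp : star χ ⬝ᵥ C *ᵥ χ = ((1 + e / Λ) / 2 : ℝ) := by
    have hhalf : star ((√2 : ℂ)⁻¹) * (√2 : ℂ)⁻¹ = 1 / 2 := by
      rw [star_inv₀, Complex.star_def, Complex.conj_ofReal, ← mul_inv, ← Complex.ofReal_mul,
        Real.mul_self_sqrt zero_le_two]
      norm_num
    rw [hC, hχ, star_sumElim_dotProduct_fromBlocks_diagonal_mulVec]
    simp only [star_smul, mulVec_smul, smul_mulVec, one_mulVec, smul_dotProduct,
      dotProduct_smul, hψ, he, smul_eq_mul]
    push_cast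
    linear_combination (1 + e / Λ) * hhalf
  have hamp_nonneg : 0 ≤ (1 + e / Λ) / 2 := by
    have : -1 ≤ e / Λ := by rw [le_div_iff₀ hΛ]; linarith [neg_abs_le e]
    linarith
  rw [he, hamp, Complex.norm_real, Real.norm_of_nonneg hamp_nonneg]
  congr 1
  field_simp
  ring

/-- Let `M` be an `N × N` Hermitian matrix with `‖M‖ ≤ Λ`, `Λ > 0`, and let `ψ ∈ ℂ^N` be a
unit vector. With `C = fromBlocks(I, 0, 0, M/Λ) = |0⟩⟨0| ⊗ I + |1⟩⟨1| ⊗ (M/Λ)` and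
`χ = (1/√2)·(ψ, ψ) = |+⟩ ⊗ ψ`, we have `⟨ψ, Mψ⟩ = Λ·(2·|⟨χ, Cχ⟩| − 1)`. -/
theorem expectation_eq_amplitude (N : ℕ) (hN : 0 < N)
    (M : Matrix (Fin N) (Fin N) ℂ) (hM : M.IsHermitian)
    (Λ : ℝ) (hΛ : 0 < Λ) (hMΛ : l2OpNorm M ≤ Λ)
    (ψ : Fin N → ℂ) (hψ : star ψ ⬝ᵥ ψ = 1)
    (C : Matrix (Fin N ⊕ Fin N) (Fin N ⊕ Fin N) ℂ)
    (hC : C = Matrix.fromBlocks 1 0 0 ((Λ : ℂ)⁻¹ • M))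
    (χ : Fin N ⊕ Fin N → ℂ)
    (hχ : χ = Sum.elim (((Real.sqrt 2)⁻¹ : ℂ) • ψ) (((Real.sqrt 2)⁻¹ : ℂ) • ψ)) :
    star ψ ⬝ᵥ M.mulVec ψ
      = ((Λ * (2 * ‖star χ ⬝ᵥ C.mulVec χ‖ - 1) : ℝ) : ℂ) :=
  expectation_eq_amplitude_general N M hM Λ hΛ hMΛ ψ hψ C hC χ hχ
end

section
/- Let a, n be positive integers, let M be a 2^n × 2^n Hermitian complex matrix, let α > 0, and let U be a unitary matrix indexed by Fin 2^a × Fin 2^n that is an exact α-block encoding of M, i.e. U((0,s₁),(0,s₂)) = M_{s₁s₂}/α for all s₁,s₂ ∈ Fin 2^n. Then there exists a unitary matrix U′ indexed by Fin 2^a × Fin 2 × Fin 2^n such that for all c₁,c₂ ∈ Fin 2 and s₁,s₂ ∈ Fin 2^n: U′((0,c₁,s₁),(0,c₂,s₂)) equals δ_{s₁s₂} if c₁ = c₂ = 0, equals M_{s₁s₂}/α if c₁ = c₂ = 1, and equals 0 if c₁ ≠ c₂. In other words, U′ is an exact 1-block encoding of the controlled matrix c-(M/α) = |0⟩⟨0|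 ⊗ I_{2^n} + |1⟩⟨1| ⊗ (M/α). -/
open Matrix

namespace Matrix

variable {m o p R : Type*} [DecidableEq m] [DecidableEq p]

section Unitary

variable [Fintype m] [Fintype o] [DecidableEq o] [Fintype p] [CommRing R] [StarRing R]

theorem blockDiagonal_mem_unitaryGroup {M : o → Matrix m m R}
    (h : ∀ i, M i ∈ unitaryGroup m R) : blockDiagonal M ∈ unitaryGroup (m × o) R := by
  have hstar : star (blockDiagonal M) = blockDiagonal fun i => star (M i) := by
    simp only [star_eq_conjTranspose, blockDiagonal_conjTranspose]
  rw [mem_unitaryGroup_iff, hstar, ← blockDiagonal_mul]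
  simp only [fun i => mem_unitaryGroup_iff.mp (h i)]
  exact blockDiagonal_one

theorem submatrix_equiv_mem_unitaryGroup {A : Matrix m m R} (hA : A ∈ unitaryGroup m R)
    (e : p ≃ m) : A.submatrix e e ∈ unitaryGroup p R := by
  have hstar : star (A.submatrix e e) = (star A).submatrix e e := by
    simp only [star_eq_conjTranspose, conjTranspose_submatrix]
  rw [mem_unitaryGroup_iff, hstar, submatrix_mul_equiv, mem_unitaryGroup_iff.mp hA,
    submatrix_one_equiv]

end Unitary

/-- `|0⟩⟨0| ⊗ 1 + |1⟩⟨1| ⊗ U`, with the control qubit placed between the factors `m` and `p`. -/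
def controlled [Zero R] [One R] (U : Matrix (m × p) (m × p) R) :
    Matrix (m × Fin 2 × p) (m × Fin 2 × p) R :=
  let e : m × Fin 2 × p ≃ (m × p) × Fin 2 :=
    (Equiv.prodCongr (Equiv.refl m) (Equiv.prodComm (Fin 2) p)).trans
      (Equiv.prodAssoc m p (Fin 2)).symm
  (blockDiagonal ![1, U]).submatrix e e

theorem controlled_mem_unitaryGroup [Fintype m] [Fintype p] [CommRing R] [StarRing R]
    {U : Matrix (m × p) (m × p) R} (hU : U ∈ unitaryGroup (m × p) R) :
    controlled U ∈ unitaryGroup (m × Fin 2 × p) R := by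
  refine submatrix_equiv_mem_unitaryGroup (blockDiagonal_mem_unitaryGroup fun c => ?_) _
  fin_cases c
  exacts [one_mem _, hU]

section Entries

variable [Zero R] [One R] (U : Matrix (m × p) (m × p) R)

@[simp]
theorem controlled_apply_zero_zero (i j : m) (s t : p) :
    controlled U (i, 0, s) (j, 0, t) = (1 : Matrix (m × p) (m × p) R) (i, s) (j, t) := by
  simp [controlled, blockDiagonal_apply]

@[simp]
theorem controlled_apply_one_one (i j : m) (s t : p) :
    controlled U (i, 1, s) (j, 1, t) = U (i, s) (j, t) := by
  simp [controlled, blockDiagonal_apply]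

theorem controlled_apply_of_ne {c d : Fin 2} (hcd : c ≠ d) (i j : m) (s t : p) :
    controlled U (i, c, s) (j, d, t) = 0 := by
  simp [controlled, blockDiagonal_apply, hcd]

end Entries

end Matrix

theorem controlled_block_encoding_general (a n : ℕ)
    (M : Matrix (Fin (2 ^ n)) (Fin (2 ^ n)) ℂ)
    (α : ℝ)
    (U : Matrix (Fin (2 ^ a) × Fin (2 ^ n)) (Fin (2 ^ a) × Fin (2 ^ n)) ℂ)
    (hU : U ∈ Matrix.unitaryGroup (Fin (2 ^ a) × Fin (2 ^ n)) ℂ)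
    (hUM : ∀ s₁ s₂ : Fin (2 ^ n), U (0, s₁) (0, s₂) = M s₁ s₂ / (α : ℂ)) :
    ∃ U' : Matrix (Fin (2 ^ a) × Fin 2 × Fin (2 ^ n))
        (Fin (2 ^ a) × Fin 2 × Fin (2 ^ n)) ℂ,
      U' ∈ Matrix.unitaryGroup (Fin (2 ^ a) × Fin 2 × Fin (2 ^ n)) ℂ ∧
      (∀ s₁ s₂ : Fin (2 ^ n), U' (0, 0, s₁) (0, 0, s₂) = if s₁ = s₂ then 1 else 0) ∧
      (∀ s₁ s₂ : Fin (2 ^ n), U' (0, 1, s₁) (0, 1, s₂) = M s₁ s₂ / (α : ℂ)) ∧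
      (∀ (c₁ c₂ : Fin 2) (s₁ s₂ : Fin (2 ^ n)), c₁ ≠ c₂ →
        U' (0, c₁, s₁) (0, c₂, s₂) = 0) :=
  ⟨controlled U, controlled_mem_unitaryGroup hU,
    fun s₁ s₂ => by simp [one_apply],
    fun s₁ s₂ => by rw [controlled_apply_one_one, hUM],
    fun _ _ s₁ s₂ hc => controlled_apply_of_ne U hc _ _ s₁ s₂⟩

/-- Given an exact `α`-block encoding `U` (on `a` ancilla qubits and `n` system qubits)
of a Hermitian matrix `M`, there exists a unitary `U′` on one extra (control) qubit that
is an exact `1`-block encoding of the controlled matrix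
`c-(M/α) = |0⟩⟨0| ⊗ I + |1⟩⟨1| ⊗ (M/α)`. -/
theorem controlled_block_encoding (a n : ℕ) (ha : 0 < a) (hn : 0 < n)
    (M : Matrix (Fin (2 ^ n)) (Fin (2 ^ n)) ℂ) (hM : M.IsHermitian)
    (α : ℝ) (hα : 0 < α)
    (U : Matrix (Fin (2 ^ a) × Fin (2 ^ n)) (Fin (2 ^ a) × Fin (2 ^ n)) ℂ)
    (hU : U ∈ Matrix.unitaryGroup (Fin (2 ^ a) × Fin (2 ^ n)) ℂ)
    (hUM : ∀ s₁ s₂ : Fin (2 ^ n), U (0, s₁) (0, s₂) = M s₁ s₂ / (α : ℂ)) :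
    ∃ U' : Matrix (Fin (2 ^ a) × Fin 2 × Fin (2 ^ n))
        (Fin (2 ^ a) × Fin 2 × Fin (2 ^ n)) ℂ,
      U' ∈ Matrix.unitaryGroup (Fin (2 ^ a) × Fin 2 × Fin (2 ^ n)) ℂ ∧
      (∀ s₁ s₂ : Fin (2 ^ n), U' (0, 0, s₁) (0, 0, s₂) = if s₁ = s₂ then 1 else 0) ∧
      (∀ s₁ s₂ : Fin (2 ^ n), U' (0, 1, s₁) (0, 1, s₂) = M s₁ s₂ / (α : ℂ)) ∧
      (∀ (c₁ c₂ : Fin 2) (s₁ s₂ : Fin (2 ^ n)), c₁ ≠ c₂ →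
        U' (0, c₁, s₁) (0, c₂, s₂) = 0) :=
  controlled_block_encoding_general a n M α U hU hUM
end

section
/- There exists a constant C > 0 such that for all ε, δ ∈ (0, 1/2], there exists a real polynomial P that is odd (P(−x) = −P(x)) and has degree at most C·(1/δ)·log(1/ε), such that for all real x with δ ≤ |x| ≤ 1: |P(x)| ≤ 1 and |P(x) − (3δ/4)·(1/x)| < ε. -/
open Polynomial Polynomial.Chebyshev

lemma natDegree_T_le (n : ℕ) : (T ℝ (n : ℤ)).natDegree ≤ n := by
  induction n using Nat.strong_induction_on with
  | _ n ih =>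
    match n with
    | 0 => simp
    | 1 => simp
    | (k+2) =>
      have h1 := ih (k+1) (by omega)
      have h0 := ih k (by omega)
      have hT : T ℝ ((k : ℤ) + 2) = 2 * X * T ℝ ((k : ℤ) + 1) - T ℝ (k : ℤ) :=
        T_add_two ℝ (k : ℤ)
      have : ((k + 2 : ℕ) : ℤ) = (k : ℤ) + 2 := by push_cast; ring
      rw [this, hT]
      refine (natDegree_sub_le _ _).trans ?_
      have : (2 * X * T ℝ ((k : ℤ) + 1)).natDegree ≤ k + 2 := by
        refine natDegree_mul_le.trans ?_
        have h2 : (2 * X : ℝ[X]).natDegree ≤ 1 := by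
          refine natDegree_mul_le.trans ?_
          simp
        have : ((k + 1 : ℕ) : ℤ) = (k : ℤ) + 1 := by push_cast; ring
        rw [← this]
        omega
      omega

lemma T_eval_add_inv (z : ℝ) (hz : z ≠ 0) (n : ℕ) :
    (T ℝ (n : ℤ)).eval ((z + z⁻¹) / 2) = (z ^ n + z⁻¹ ^ n) / 2 := by
  induction n using Nat.strong_induction_on with
  | _ n ih =>
    match n with
    | 0 => simp
    | 1 => simp
    | (k+2) =>
      have h1 := ih (k+1) (by omega)
      have h0 := ih k (by omega)
      have hT : T ℝ ((k : ℤ) + 2) = 2 * X * T ℝ ((k : ℤ) + 1) - T ℝ (k : ℤ) :=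
        T_add_two ℝ (k : ℤ)
      have e2 : ((k + 2 : ℕ) : ℤ) = (k : ℤ) + 2 := by push_cast; ring
      have e1 : ((k + 1 : ℕ) : ℤ) = (k : ℤ) + 1 := by push_cast; ring
      rw [e2, hT]
      rw [e1] at h1
      simp only [eval_sub, eval_mul, eval_ofNat, eval_X, h1, h0]
      field_simp
      have hzz : z * z⁻¹ = 1 := mul_inv_cancel₀ hz
      linear_combination (z * z⁻¹ ^ k - z⁻¹ * z⁻¹ ^ k) * hzz

lemma abs_T_eval_le_one (n : ℤ) (y : ℝ) (hy : |y| ≤ 1) : |(T ℝ n).eval y| ≤ 1 := by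
  obtain ⟨h1, h2⟩ := abs_le.mp hy
  rw [← Real.cos_arccos h1 h2, T_real_cos]
  exact Real.abs_cos_le_one _

set_option maxHeartbeats 1000000 in
/-- There exists a constant `C > 0` such that for all `ε, δ ∈ (0, 1/2]`, there is an odd
real polynomial `P` of degree at most `C·(1/δ)·log(1/ε)` satisfying, for all real `x`
with `δ ≤ |x| ≤ 1`: `|P(x)| ≤ 1` and `|P(x) − (3δ/4)·(1/x)| < ε`. -/
theorem poly_approx_of_inv :
    ∃ C : ℝ, 0 < C ∧
      ∀ ε δ : ℝ, ε ∈ Set.Ioc (0 : ℝ) (1 / 2) → δ ∈ Set.Ioc (0 : ℝ) (1 / 2) →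
        ∃ P : Polynomial ℝ,
          (∀ x : ℝ, P.eval (-x) = -P.eval x) ∧
          (P.natDegree : ℝ) ≤ C * (1 / δ) * Real.log (1 / ε) ∧
          ∀ x : ℝ, δ ≤ |x| → |x| ≤ 1 →
            |P.eval x| ≤ 1 ∧ |P.eval x - (3 * δ / 4) * (1 / x)| < ε := by
  refine ⟨10, by norm_num, ?_⟩
  rintro ε δ ⟨hε0, hε2⟩ ⟨hδ0, hδ2⟩
  set L : ℝ := Real.log (1 / ε) with hLdef
  have hεinv : (2 : ℝ) ≤ 1 / ε := by
    rw [le_div_iff₀ hε0]; linarith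
  have hL2 : Real.log 2 ≤ L := Real.log_le_log (by norm_num) hεinv
  have hlog2 : (0.6931471803 : ℝ) < Real.log 2 := Real.log_two_gt_d9
  have hL : (0.6931471803 : ℝ) < L := lt_of_lt_of_le hlog2 hL2
  set n : ℕ := ⌈(1 / δ) * (L + 2)⌉₊ with hndef
  have hpos : 0 < (1 / δ) * (L + 2) := by positivity
  have hnlb : (1 / δ) * (L + 2) ≤ (n : ℝ) := Nat.le_ceil _
  have hnub : (n : ℝ) < (1 / δ) * (L + 2) + 1 := Nat.ceil_lt_add_one (le_of_lt hpos)
  set a : ℝ := δ ^ 2 with hadef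
  have ha1 : a < 1 := by nlinarith
  have ha0 : 0 < a := by positivity
  set z : ℝ := (1 + δ) / (1 - δ) with hzdef
  have h1δ : 0 < 1 - δ := by linarith
  have hz1 : 1 < z := by
    rw [lt_div_iff₀ h1δ]; linarith
  have hz0 : (0 : ℝ) < z := lt_trans one_pos hz1
  set μ0 : ℝ := (1 + a) / (1 - a) with hμ0def
  have h1δ' : (1 + δ) ≠ 0 := by positivity
  have h1a' : (1 - δ ^ 2) ≠ 0 := by nlinarith
  have hμ0 : (z + z⁻¹) / 2 = μ0 := by
    rw [hzdef, hμ0def, hadef, inv_div]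
    rw [div_add_div _ _ (ne_of_gt h1δ) h1δ']
    rw [div_div, div_eq_div_iff (by nlinarith) h1a']
    ring
  set v : ℝ := (T ℝ (n : ℤ)).eval μ0 with hvdef
  have hveq : v = (z ^ n + z⁻¹ ^ n) / 2 := by
    rw [hvdef, ← hμ0, T_eval_add_inv z (ne_of_gt hz0)]
  have hzinv0 : 0 < z⁻¹ := by positivity
  have hvlb : z ^ n / 2 ≤ v := by
    rw [hveq]
    have : 0 < z⁻¹ ^ n := by positivity
    linarith
  have hv0 : 0 < v := lt_of_lt_of_le (by positivity) hvlb
  -- z ≥ exp δ, so z ^ n ≥ exp (δ * n) ≥ exp (L + 2)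
  have hexpz : Real.exp δ ≤ z := by
    have h1 : 1 - δ ≤ Real.exp (-δ) := by
      have := Real.add_one_le_exp (-δ); linarith
    have h2 : Real.exp δ ≤ 1 / (1 - δ) := by
      rw [le_div_iff₀ h1δ]
      calc Real.exp δ * (1 - δ) ≤ Real.exp δ * Real.exp (-δ) := by
            apply mul_le_mul_of_nonneg_left h1 (le_of_lt (Real.exp_pos δ))
        _ = 1 := by rw [← Real.exp_add]; simp
    calc Real.exp δ ≤ 1 / (1 - δ) := h2
      _ ≤ z := by rw [hzdef, div_le_div_iff₀ h1δ h1δ]; nlinarith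
  have hδn : L + 2 ≤ δ * n := by
    have := mul_le_mul_of_nonneg_left hnlb (le_of_lt hδ0)
    calc L + 2 = δ * ((1/δ) * (L + 2)) := by field_simp
      _ ≤ δ * n := this
  have hzn : Real.exp (L + 2) ≤ z ^ n := by
    calc Real.exp (L + 2) ≤ Real.exp (δ * n) := Real.exp_le_exp.mpr hδn
      _ = (Real.exp δ) ^ n := by rw [← Real.exp_nat_mul]; ring_nf
      _ ≤ z ^ n := pow_le_pow_left₀ (le_of_lt (Real.exp_pos δ)) hexpz n
  have hexpL : Real.exp L = 1 / ε := Real.exp_log (by positivity)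
  have hexp2 : (3 : ℝ) ≤ Real.exp 2 := by
    have := Real.add_one_le_exp (2 : ℝ); linarith
  have hvbig : 3 / (2 * ε) ≤ v := by
    have h1 : Real.exp (L + 2) = (1 / ε) * Real.exp 2 := by
      rw [Real.exp_add, hexpL]
    have h2 : 3 / ε ≤ Real.exp (L + 2) := by
      rw [h1]
      have : (3 : ℝ) / ε = (1 / ε) * 3 := by ring
      rw [this]
      exact mul_le_mul_of_nonneg_left hexp2 (by positivity)
    calc 3 / (2 * ε) = (3 / ε) / 2 := by ring
      _ ≤ Real.exp (L + 2) / 2 := by linarith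
      _ ≤ z ^ n / 2 := by linarith
      _ ≤ v := hvlb
  -- the polynomial
  set m : ℝ := 2 / (1 - a) with hmdef
  set μp : ℝ[X] := Polynomial.C μ0 - Polynomial.C m * X with hμpdef
  set N : ℝ[X] := Polynomial.C v - (T ℝ (n : ℤ)).comp μp with hNdef
  have hN0 : N.coeff 0 = 0 := by
    rw [coeff_zero_eq_eval_zero, hNdef]
    simp [hμpdef, hvdef]
  set q : ℝ[X] := N.divX with hqdef
  have hXq : X * q = N := by
    have := X_mul_divX_add N
    rw [hN0] at this
    simpa using this
  set c : ℝ := 3 * δ / 4 with hcdef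
  set P : ℝ[X] := Polynomial.C (c / v) * (X * q.comp (X ^ 2)) with hPdef
  clear_value n z μ0 v m μp N q c P
  refine ⟨P, ?_, ?_, ?_⟩
  · intro x
    simp only [hPdef, eval_mul, eval_C, eval_X, eval_comp, eval_pow, neg_sq]
    ring
  · -- degree bound
    have hdq : q.natDegree ≤ n := by
      calc q.natDegree = N.divX.natDegree := by rw [hqdef]
        _ ≤ N.natDegree := natDegree_divX_le
        _ = (Polynomial.C v - (T ℝ (n : ℤ)).comp μp).natDegree := by rw [hNdef]
        _ ≤ max (Polynomial.C v).natDegree ((T ℝ (n : ℤ)).comp μp).natDegree :=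
            natDegree_sub_le _ _
        _ ≤ n := by
          apply max_le
          · simp
          · refine natDegree_comp_le.trans ?_
            have h1 : μp.natDegree ≤ 1 := by
              rw [hμpdef]
              refine (natDegree_sub_le _ _).trans ?_
              apply max_le
              · simp
              · exact natDegree_mul_le.trans (by simp)
            calc (T ℝ (n : ℤ)).natDegree * μp.natDegree ≤ n * 1 :=
                  Nat.mul_le_mul (natDegree_T_le n) h1
              _ = n := by omega
    have hdP : P.natDegree ≤ 2 * n + 1 := by
      calc P.natDegree
          = (Polynomial.C (c / v) * (X * q.comp (X ^ 2))).natDegree := by rw [hPdef]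
        _ ≤ (Polynomial.C (c / v)).natDegree + (X * q.comp (X ^ 2)).natDegree :=
            natDegree_mul_le
        _ ≤ 0 + ((X : ℝ[X]).natDegree + (q.comp (X ^ 2)).natDegree) := by
            gcongr
            · simp
            · exact natDegree_mul_le
        _ ≤ 0 + (1 + q.natDegree * 2) := by
            gcongr
            · simp
            · exact natDegree_comp_le.trans (by gcongr; simp)
        _ ≤ 2 * n + 1 := by omega
    have : (P.natDegree : ℝ) ≤ 2 * n + 1 := by exact_mod_cast hdP
    refine this.trans ?_
    have h1 : (2 : ℝ) * n + 1 ≤ 2 * ((1/δ) * (L + 2) + 1) + 1 := by linarith [hnub]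
    refine h1.trans ?_
    rw [← sub_nonneg]
    have heq : 10 * (1/δ) * L - (2 * ((1/δ) * (L + 2) + 1) + 1) =
        (8 * L - (4 + 3 * δ)) / δ := by field_simp; ring
    rw [heq]
    apply div_nonneg (by nlinarith) hδ0.le
  · -- the estimates
    intro x hxl hxu
    rw [hcdef]
    have hx0 : x ≠ 0 := by
      intro h; rw [h] at hxl; simp at hxl; linarith
    have hxa : a ≤ x ^ 2 := by
      rw [hadef]
      calc δ ^ 2 ≤ |x| ^ 2 := by nlinarith [abs_nonneg x]
        _ = x ^ 2 := sq_abs x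
    have hx1 : x ^ 2 ≤ 1 := by
      calc x ^ 2 = |x| ^ 2 := (sq_abs x).symm
        _ ≤ 1 := by nlinarith [abs_nonneg x]
    set Tv : ℝ := (T ℝ (n : ℤ)).eval (μ0 - m * x ^ 2) with hTvdef
    clear_value Tv
    have hμbd : |μ0 - m * x ^ 2| ≤ 1 := by
      have h1a : (0 : ℝ) < 1 - a := by linarith
      have heq : μ0 - m * x ^ 2 = (1 + a - 2 * x ^ 2) / (1 - a) := by
        rw [hμ0def, hmdef]; field_simp
      rw [heq, abs_div, abs_of_pos h1a, div_le_one h1a, abs_le]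
      constructor <;> nlinarith
    have hTb : |Tv| ≤ 1 := by
      rw [hTvdef]; exact abs_T_eval_le_one _ _ hμbd
    have hNx : x ^ 2 * q.eval (x ^ 2) = v - Tv := by
      have h1 : (X * q).eval (x ^ 2) = N.eval (x ^ 2) := by rw [hXq]
      simpa [hNdef, hμpdef, eval_comp, hTvdef] using h1
    have hPx : P.eval x = (c / v) * (x * q.eval (x ^ 2)) := by
      simp [hPdef, eval_comp]
    have herr : P.eval x - (3 * δ / 4) * (1 / x) = -(c * Tv) / (v * x) := by
      have hq' : q.eval (x ^ 2) = (v - Tv) / x ^ 2 := by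
        rw [← hNx]
        field_simp
      rw [hPx, hq', hcdef]
      field_simp
      ring
    have herrb : |P.eval x - (3 * δ / 4) * (1 / x)| ≤ (3 / 4) / v := by
      rw [herr, abs_div, abs_neg, abs_mul, abs_mul, abs_of_pos hv0]
      rw [div_le_div_iff₀ (by positivity) hv0]
      have hcnn : (0:ℝ) ≤ c := by rw [hcdef]; linarith
      have habs : |c| = c := abs_of_nonneg hcnn
      rw [habs]
      have hcnn' : (0:ℝ) ≤ c := hcnn
      have h1 : c * |Tv| ≤ c * 1 := mul_le_mul_of_nonneg_left hTb hcnn'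
      have h3 : δ * v ≤ |x| * v := mul_le_mul_of_nonneg_right hxl hv0.le
      calc c * |Tv| * v ≤ c * v := by
            have := mul_le_mul_of_nonneg_right h1 hv0.le
            linarith
        _ = (3 * δ / 4) * v := by rw [hcdef]
        _ ≤ 3 / 4 * (v * |x|) := by linarith [h3]
    have hεv : (3 / 4) / v ≤ ε / 2 := by
      rw [div_le_iff₀ hv0]
      have h4 : ε / 2 * (3 / (2 * ε)) ≤ ε / 2 * v :=
        mul_le_mul_of_nonneg_left hvbig (by positivity)
      have h5 : ε / 2 * (3 / (2 * ε)) = 3 / 4 := by field_simp; ring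
      linarith
    constructor
    · have h1 : |(3 * δ / 4) * (1 / x)| ≤ 3 / 4 := by
        have hax : 0 < |x| := lt_of_lt_of_le hδ0 hxl
        rw [abs_mul, abs_one_div, abs_of_nonneg (show (0:ℝ) ≤ 3 * δ / 4 by linarith)]
        have e : 3 * |x| / 4 * (1 / |x|) = 3 / 4 := by field_simp
        have h6 : 3 * δ / 4 * (1 / |x|) ≤ 3 * |x| / 4 * (1 / |x|) :=
          mul_le_mul_of_nonneg_right (by linarith) (by positivity)
        linarith
      have h2 := abs_sub_abs_le_abs_sub (P.eval x) ((3 * δ / 4) * (1 / x))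
      have h3 : ε / 2 ≤ 1 / 4 := by linarith
      calc |P.eval x| ≤ |(3 * δ / 4) * (1 / x)| + |P.eval x - (3 * δ / 4) * (1 / x)| := by
            have h7 := abs_add_le ((3 * δ / 4) * (1 / x)) (P.eval x - (3 * δ / 4) * (1 / x))
            simpa using h7
        _ ≤ 3 / 4 + (3 / 4) / v := by linarith
        _ ≤ 3 / 4 + ε / 2 := by linarith
        _ ≤ 1 := by linarith
    · calc |P.eval x - (3 * δ / 4) * (1 / x)| ≤ (3/4)/v := herrb
        _ ≤ ε / 2 := hεv
        _ < ε := by linarith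
end
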